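/- Let $Q$ be a Loomis–Whitney query of degree $k \ge 3$: its variables are $A_1,\ldots,A_k$ and it has $k$ atoms, where atom $i$ has schema $\{A_1,\ldots,A_k\}\setminus\{A_i\}$. Then every component $\widehat Q_\sigma$ of its multivariate extension has fractional hypertree width exactly $3/2$. -/

import Mathlib

/-- The set `at(x)` of (indices of) atoms whose schema contains variable `x`. -/
def atomsOf {k : ℕ} {V : Type*} [DecidableEq V] (X : Fin k → Finset V) (x : V) :
    Finset (Fin k) :=
  Finset.univ.filter (fun i => x ∈ X i)

/-- A query with atom schemas `X` is **hierarchical** if for every pair of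
variables `x, y`, either `at(x) ⊆ at(y)`, or `at(y) ⊆ at(x)`, or
`at(x) ∩ at(y) = ∅`. -/
def Hierarchical {k : ℕ} {V : Type*} [DecidableEq V] (X : Fin k → Finset V) : Prop :=
  ∀ x y : V, atomsOf X x ⊆ atomsOf X y ∨ atomsOf X y ⊆ atomsOf X x ∨
    atomsOf X x ∩ atomsOf X y = ∅

/-- The atom schemas of the component `Q̂_σ` of the multivariate extension of
the query with atom schemas `X`: for a permutation `σ` of `[k]` and fresh
variables `Z_1, …, Z_k` (represented by `Sum.inr`), the `i`-th atom of `Q̂_σ`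
has schema `{Z_1, …, Z_i} ∪ X (σ i)`. -/
def hatSchema {k : ℕ} {V : Type*} [DecidableEq V]
    (X : Fin k → Finset V) (σ : Equiv.Perm (Fin k)) (i : Fin k) :
    Finset (V ⊕ Fin k) :=
  (X (σ i)).image Sum.inl ∪
    (Finset.univ.filter (fun j : Fin k => j ≤ i)).image Sum.inr

/-- The **fractional edge cover number** `ρ*` of the query with atom schemas
`X` restricted to the set `B` of variables: the infimum of `∑ i, λ i` over all
nonnegative weightings `λ` of the atoms such that every variable in `B` is
covered with total weight at least `1` by the atoms containing it. -/
noncomputable def rhoStar {k : ℕ} {W : Type*} [DecidableEq W]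
    (X : Fin k → Finset W) (B : Finset W) : ℝ :=
  sInf {s : ℝ | ∃ lam : Fin k → ℝ, (∀ i, 0 ≤ lam i) ∧
    (∀ w ∈ B, 1 ≤ ∑ i ∈ Finset.univ.filter (fun i => w ∈ X i), lam i) ∧
    s = ∑ i : Fin k, lam i}

/-- A **tree decomposition** of the query with atom schemas `X`: a finite tree
`G` on nodes `ι` with bags `bag t` of variables, such that every atom's schema
is contained in some bag, and for every variable the bags containing it induce
a connected subtree. -/
structure TreeDecomp {k : ℕ} {W : Type*} (X : Fin k → Finset W) where
  ι : Type
  [instFin : Fintype ι]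
  G : SimpleGraph ι
  isTree : G.IsTree
  bag : ι → Finset W
  covers : ∀ i : Fin k, ∃ t : ι, X i ⊆ bag t
  connected : ∀ w : W, (G.induce {t | w ∈ bag t}).Preconnected

attribute [instance] TreeDecomp.instFin

/-- The atom schemas of the Loomis–Whitney query of degree `k`: variables are
`A_1, …, A_k` and atom `i` has schema `{A_1, …, A_k} \ {A_i}`. -/
def lwSchema (k : ℕ) (i : Fin k) : Finset (Fin k) := Finset.univ.erase i


/-!
Index the atoms of `Q̂_σ` from `1` to `k`. For the lower bound, the variables `Z_{k-1}`,
`A_{σ(k-1)}` and `A_{σ(k)}` pairwise share an atom (`k`, `k-1` and `k-2`), but no atom contains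
all three. By the Helly property of subtrees, every tree decomposition has a bag containing all
three, and a fractional edge cover of such a bag costs at least `3/2`, since each atom contributes
to at most two of the three coverage sums.

For the upper bound, take the two bags `X̂_k` (the last atom) and "all variables but `Z_k`". The
first costs `1`; in the second every variable lies in at least two of the last three atoms, so
weight `1/2` on those covers it at cost `3/2`.
-/

namespace SimpleGraph

variable {V : Type*} {G : SimpleGraph V}

theorem Preconnected.exists_isPath_support_subset {S : Set V} (hS : (G.induce S).Preconnected)
    {u v : V} (hu : u ∈ S) (hv : v ∈ S) :
    ∃ p : G.Walk u v, p.IsPath ∧ ∀ t ∈ p.support, t ∈ S := by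
  classical
  obtain ⟨w⟩ := hS ⟨u, hu⟩ ⟨v, hv⟩
  let w' : G.Walk u v := w.map (Embedding.induce S).toHom
  refine ⟨w'.bypass, w'.bypass_isPath, fun t ht => ?_⟩
  obtain ⟨⟨t, htS⟩, -, rfl⟩ := List.mem_map.1
    ((Walk.support_map _ w) ▸ w'.support_bypass_subset_support ht)
  exact htS

theorem IsAcyclic.mem_of_mem_support_of_preconnected (hG : G.IsAcyclic) {S : Set V}
    (hS : (G.induce S).Preconnected) {u v : V} (hu : u ∈ S) (hv : v ∈ S) {p : G.Walk u v}
    (hp : p.IsPath) {t : V} (ht : t ∈ p.support) : t ∈ S := by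
  obtain ⟨q, hq, hqS⟩ := hS.exists_isPath_support_subset hu hv
  have : p = q := congrArg Subtype.val ((hG.subsingleton_path u v).elim ⟨p, hp⟩ ⟨q, hq⟩)
  exact hqS t (this ▸ ht)

namespace Walk

theorem IsPath.append_of_support_inter {u v w : V} {p : G.Walk u v} {q : G.Walk v w}
    (hp : p.IsPath) (hq : q.IsPath) (hpq : ∀ t ∈ p.support, t ∈ q.support → t = v) :
    (p.append q).IsPath := by
  rw [isPath_def, support_append]
  refine hp.support_nodup.append hq.support_nodup.tail fun t htp htq => ?_
  obtain rfl := hpq t htp (List.mem_of_mem_tail htq)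
  have hnodup := hq.support_nodup
  rw [← q.cons_tail_support] at hnodup
  exact (List.nodup_cons.1 hnodup).1 htq

theorem exists_isPath_to_first_mem {T : Set V} {u v : V} (p : G.Walk u v) (hv : v ∈ T) :
    ∃ m ∈ p.support, m ∈ T ∧ ∃ q : G.Walk u m, q.IsPath ∧ ∀ t ∈ q.support, t ∈ T → t = m := by
  classical
  induction p with
  | nil => exact ⟨_, start_mem_support _, hv, .nil, .nil, by simp⟩
  | @cons u _ _ h p ih =>
    by_cases hu : u ∈ T
    · exact ⟨u, start_mem_support _, hu, .nil, .nil, by simp⟩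
    obtain ⟨m, hmp, hmT, q, -, hfirst⟩ := ih hv
    refine ⟨m, by simp [hmp], hmT, (cons h q).bypass, bypass_isPath _, fun t ht htT => ?_⟩
    obtain rfl | htq := List.mem_cons.1 ((cons h q).support_bypass_subset_support ht)
    · exact absurd htT hu
    · exact hfirst t htq htT

end Walk

/-- The Helly property of subtrees. -/
theorem IsAcyclic.exists_mem_inter_of_preconnected (hG : G.IsAcyclic) {S₁ S₂ S₃ : Set V}
    (h₁ : (G.induce S₁).Preconnected) (h₂ : (G.induce S₂).Preconnected)
    (h₃ : (G.induce S₃).Preconnected) {a b c : V} (ha₁ : a ∈ S₁) (ha₂ : a ∈ S₂)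
    (hb₁ : b ∈ S₁) (hb₃ : b ∈ S₃) (hc₂ : c ∈ S₂) (hc₃ : c ∈ S₃) :
    ∃ m, m ∈ S₁ ∧ m ∈ S₂ ∧ m ∈ S₃ := by
  obtain ⟨pbc, -, hpbc⟩ := h₃.exists_isPath_support_subset hb₃ hc₃
  obtain ⟨m, hm, hm₂, q, hq, hfirst⟩ := pbc.exists_isPath_to_first_mem hc₂
  obtain ⟨pam, hpam, hpam₂⟩ := h₂.exists_isPath_support_subset ha₂ hm₂
  have hpath : (pam.append q.reverse).IsPath :=
    hpam.append_of_support_inter hq.reverse fun t ht htq =>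
      hfirst t (by simpa using htq) (hpam₂ t ht)
  refine ⟨m, hG.mem_of_mem_support_of_preconnected h₁ ha₁ hb₁ hpath ?_, hm₂, hpbc m hm⟩
  exact (Walk.mem_support_append_iff _ _).2 (Or.inl pam.end_mem_support)

end SimpleGraph

section RhoStar

variable {k : ℕ} {W : Type*} [DecidableEq W] (X : Fin k → Finset W) (B : Finset W)

theorem rhoStar_le_sum (lam : Fin k → ℝ) (h0 : ∀ i, 0 ≤ lam i)
    (hcov : ∀ w ∈ B, 1 ≤ ∑ i ∈ Finset.univ.filter (fun i => w ∈ X i), lam i) :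
    rhoStar X B ≤ ∑ i, lam i :=
  csInf_le ⟨0, by rintro _ ⟨lam, h0, -, rfl⟩; exact Finset.sum_nonneg fun i _ => h0 i⟩
    ⟨lam, h0, hcov, rfl⟩

theorem rhoStar_le_one_of_subset {i : Fin k} (h : B ⊆ X i) : rhoStar X B ≤ 1 := by
  simpa using rhoStar_le_sum X B (Pi.single i 1)
    (fun j => by rw [Pi.single_apply]; split_ifs <;> norm_num) (fun w hw => by simp [h hw])

theorem rhoStar_le_card_div_two (S : Finset (Fin k))
    (h : ∀ w ∈ B, 1 < (S.filter (fun i => w ∈ X i)).card) :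
    rhoStar X B ≤ S.card / 2 := by
  have hsum (T : Finset (Fin k)) :
      ∑ i ∈ T, (if i ∈ S then (1 / 2 : ℝ) else 0) = (T ∩ S).card / 2 := by
    rw [Finset.sum_ite_mem, Finset.sum_const, nsmul_eq_mul]; ring
  refine (rhoStar_le_sum X B (fun i => if i ∈ S then 1 / 2 else 0)
    (fun i => by split_ifs <;> norm_num) fun w hw => ?_).trans_eq ?_
  · rw [hsum, Finset.filter_inter, Finset.univ_inter, le_div_iff₀ two_pos, one_mul]
    exact_mod_cast h w hw
  · rw [hsum, Finset.univ_inter]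

theorem three_halves_le_rhoStar {x y z : W} (hx : x ∈ B) (hy : y ∈ B) (hz : z ∈ B)
    (hcov : ∀ w ∈ B, ∃ i, w ∈ X i) (htri : ∀ i, ¬(x ∈ X i ∧ y ∈ X i ∧ z ∈ X i)) :
    3 / 2 ≤ rhoStar X B := by
  refine le_csInf ⟨_, fun _ => 1, fun _ => zero_le_one, fun w hw => ?_, rfl⟩ ?_
  · obtain ⟨i, hi⟩ := hcov w hw
    exact Finset.single_le_sum (f := fun _ => (1 : ℝ)) (fun _ _ => zero_le_one)
      (Finset.mem_filter.2 ⟨Finset.mem_univ i, hi⟩)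
  rintro _ ⟨lam, h0, hlam, rfl⟩
  have hpair : ∀ i, (if x ∈ X i then lam i else 0) + (if y ∈ X i then lam i else 0)
      + (if z ∈ X i then lam i else 0) ≤ 2 * lam i := fun i => by
    split_ifs with hxi hyi hzi
    · exact absurd ⟨hxi, hyi, hzi⟩ (htri i)
    all_goals linarith [h0 i]
  have := Finset.sum_le_sum fun i (_ : i ∈ Finset.univ) => hpair i
  simp only [Finset.sum_add_distrib, ← Finset.mul_sum, ← Finset.sum_filter] at this
  linarith [hlam x hx, hlam y hy, hlam z hz]

end RhoStar

namespace TreeDecomp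

variable {k : ℕ} {W : Type*} {X : Fin k → Finset W}

theorem exists_bag_of_pairwise_mem (D : TreeDecomp X) {x y z : W}
    (hxy : ∃ i, x ∈ X i ∧ y ∈ X i) (hxz : ∃ i, x ∈ X i ∧ z ∈ X i)
    (hyz : ∃ i, y ∈ X i ∧ z ∈ X i) :
    ∃ t, x ∈ D.bag t ∧ y ∈ D.bag t ∧ z ∈ D.bag t := by
  obtain ⟨i, hxi, hyi⟩ := hxy
  obtain ⟨j, hxj, hzj⟩ := hxz
  obtain ⟨l, hyl, hzl⟩ := hyz
  obtain ⟨a, ha⟩ := D.covers i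
  obtain ⟨b, hb⟩ := D.covers j
  obtain ⟨c, hc⟩ := D.covers l
  exact D.isTree.isAcyclic.exists_mem_inter_of_preconnected (D.connected x) (D.connected y)
    (D.connected z) (ha hxi) (ha hyi) (hb hxj) (hb hzj) (hc hyl) (hc hzl)

theorem exists_three_halves_le_rhoStar [DecidableEq W] (D : TreeDecomp X) {x y z : W}
    (hcov : ∀ w, ∃ i, w ∈ X i) (hxy : ∃ i, x ∈ X i ∧ y ∈ X i) (hxz : ∃ i, x ∈ X i ∧ z ∈ X i)
    (hyz : ∃ i, y ∈ X i ∧ z ∈ X i) (htri : ∀ i, ¬(x ∈ X i ∧ y ∈ X i ∧ z ∈ X i)) :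
    ∃ t, 3 / 2 ≤ rhoStar X (D.bag t) := by
  obtain ⟨t, hx, hy, hz⟩ := D.exists_bag_of_pairwise_mem hxy hxz hyz
  exact ⟨t, three_halves_le_rhoStar X _ hx hy hz (fun w _ => hcov w) htri⟩

def ofTwoBags (B₁ B₂ : Finset W) (h : ∀ i, X i ⊆ B₁ ∨ X i ⊆ B₂) : TreeDecomp X where
  ι := Bool
  G := ⊤
  isTree := by
    rw [show (⊤ : SimpleGraph Bool) = SimpleGraph.starGraph true by
      ext a b; cases a <;> cases b <;> simp]
    exact SimpleGraph.isTree_starGraph true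
  bag b := bif b then B₁ else B₂
  covers i := (h i).elim (fun h => ⟨true, h⟩) (fun h => ⟨false, h⟩)
  connected w := by rw [SimpleGraph.induce_top]; exact SimpleGraph.preconnected_top

end TreeDecomp

section LoomisWhitney

@[simp]
theorem inl_mem_hatSchema_lwSchema {k : ℕ} (σ : Equiv.Perm (Fin k)) (a i : Fin k) :
    Sum.inl a ∈ hatSchema (lwSchema k) σ i ↔ a ≠ σ i := by
  simp [hatSchema, lwSchema]

@[simp]
theorem inr_mem_hatSchema_lwSchema {k : ℕ} (σ : Equiv.Perm (Fin k)) (j i : Fin k) :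
    Sum.inr j ∈ hatSchema (lwSchema k) σ i ↔ j ≤ i := by
  simp [hatSchema, lwSchema]

variable {n : ℕ} (σ : Equiv.Perm (Fin (n + 3)))

theorem exists_mem_hatSchema_lwSchema (w : Fin (n + 3) ⊕ Fin (n + 3)) :
    ∃ i, w ∈ hatSchema (lwSchema (n + 3)) σ i := by
  rcases w with a | j
  · obtain ⟨b, hb⟩ := exists_ne a
    exact ⟨σ.symm b, by simpa using hb.symm⟩
  · exact ⟨Fin.last _, by simpa using Fin.le_last j⟩

/-- With the last three atoms `p, q, r`, the variables `Z_q`, `A_{σ q}`, `A_{σ r}` form a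
triangle: they are pairwise covered by `r`, `q`, `p` but no atom contains all three. -/
theorem exists_bag_three_halves_le_rhoStar_lwSchema
    (D : TreeDecomp (hatSchema (lwSchema (n + 3)) σ)) :
    ∃ t, 3 / 2 ≤ rhoStar (hatSchema (lwSchema (n + 3)) σ) (D.bag t) := by
  refine D.exists_three_halves_le_rhoStar (x := .inr ⟨n + 1, by omega⟩)
    (y := .inl (σ ⟨n + 1, by omega⟩)) (z := .inl (σ (Fin.last _)))
    (exists_mem_hatSchema_lwSchema σ) ⟨Fin.last _, ?_⟩
    ⟨⟨n + 1, by omega⟩, ?_⟩ ⟨⟨n, by omega⟩, ?_⟩ fun i => ?_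
  all_goals simp [Fin.ext_iff, Fin.le_def]
  all_goals omega

theorem one_lt_card_filter_mem_hatSchema_lwSchema {w : Fin (n + 3) ⊕ Fin (n + 3)}
    (hw : w ≠ .inr (Fin.last _)) :
    1 < (({⟨n, by omega⟩, ⟨n + 1, by omega⟩, Fin.last _} : Finset (Fin (n + 3))).filter
      (w ∈ hatSchema (lwSchema (n + 3)) σ ·)).card := by
  have hpq : (⟨n, by omega⟩ : Fin (n + 3)) ≠ ⟨n + 1, by omega⟩ := by simp
  have hpr : (⟨n, by omega⟩ : Fin (n + 3)) ≠ Fin.last _ := by simp [Fin.ext_iff]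
  have hqr : (⟨n + 1, by omega⟩ : Fin (n + 3)) ≠ Fin.last _ := by simp [Fin.ext_iff]
  rw [Finset.one_lt_card]
  rcases w with a | j
  · by_cases hp : a = σ ⟨n, by omega⟩
    · exact ⟨_, by simp [hp, hpq], _, by simp [hp, hpr], hqr⟩
    by_cases hq : a = σ ⟨n + 1, by omega⟩
    · exact ⟨_, by simp [hp], _, by simp [hq, hqr], hpr⟩
    · exact ⟨_, by simp [hp], _, by simp [hq], hpq⟩
  · have hj : j ≤ ⟨n + 1, by omega⟩ := by
      have hlast : j.val ≠ n + 2 := fun h => hw (congrArg Sum.inr (Fin.ext h))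
      change j.val ≤ n + 1
      omega
    exact ⟨_, by simp [hj], _, by simp [Fin.le_last], hqr⟩

theorem exists_treeDecomp_rhoStar_le_three_halves_lwSchema :
    ∃ D : TreeDecomp (hatSchema (lwSchema (n + 3)) σ),
      ∀ t, rhoStar (hatSchema (lwSchema (n + 3)) σ) (D.bag t) ≤ 3 / 2 := by
  have hcover : ∀ i, hatSchema (lwSchema (n + 3)) σ i ⊆ hatSchema (lwSchema (n + 3)) σ (Fin.last _)
      ∨ hatSchema (lwSchema (n + 3)) σ i ⊆ Finset.univ.erase (.inr (Fin.last _)) := by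
    intro i
    by_cases hi : i = Fin.last _
    · exact .inl (hi ▸ subset_rfl)
    refine .inr fun w hw => Finset.mem_erase.2 ⟨?_, Finset.mem_univ w⟩
    rintro rfl
    exact hi (Fin.last_le_iff.1 ((inr_mem_hatSchema_lwSchema σ _ _).1 hw))
  refine ⟨TreeDecomp.ofTwoBags _ _ hcover, fun t => ?_⟩
  cases t
  · refine (rhoStar_le_card_div_two _ _ _ fun w hw =>
      one_lt_card_filter_mem_hatSchema_lwSchema σ (Finset.ne_of_mem_erase hw)).trans ?_
    simp [Fin.ext_iff]
  · exact (rhoStar_le_one_of_subset _ _ subset_rfl).trans (by norm_num)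

end LoomisWhitney

/-- **Multivariate extensions of Loomis–Whitney queries have width exactly
`3/2`**: for a Loomis–Whitney query of degree `k ≥ 3` and any permutation `σ`,
every tree decomposition of the component `Q̂_σ` of the multivariate extension
has a bag with fractional edge cover number at least `3/2`, and there is a
tree decomposition all of whose bags have fractional edge cover number at most
`3/2`; i.e., `Q̂_σ` has fractional hypertree width exactly `3/2`. -/
theorem stmt_13 (k : ℕ) (hk : 3 ≤ k) (σ : Equiv.Perm (Fin k)) :
    (∀ D : TreeDecomp (hatSchema (lwSchema k) σ),
        ∃ t : D.ι, (3 : ℝ) / 2 ≤ rhoStar (hatSchema (lwSchema k) σ) (D.bag t)) ∧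
    (∃ D : TreeDecomp (hatSchema (lwSchema k) σ),
        ∀ t : D.ι, rhoStar (hatSchema (lwSchema k) σ) (D.bag t) ≤ (3 : ℝ) / 2) := by
  obtain ⟨n, rfl⟩ := Nat.exists_eq_add_of_le' hk
  exact ⟨exists_bag_three_halves_le_rhoStar_lwSchema σ,
    exists_treeDecomp_rhoStar_le_three_halves_lwSchema σ⟩
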